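/- arXiv:0809.4229 — 6 statements merged into one kernel-verified Lean document; each statement's English description precedes it below -/
import Mathlib

section
/- For every real number x, |x - tanh(x)| ≤ |x| * tanh²(x). -/
/-! For `x ≥ 0`, write `s = sinh x`, `c = cosh x`, so `tanh x = s / c` and `1 - tanh² x = 1 / c²`.
The bound `x - tanh x ≤ x tanh² x` becomes `x ≤ s c = sinh (2x) / 2`, and `0 ≤ x - tanh x`
becomes `s ≤ x c`, which holds because `x c - s` vanishes at `0` and has derivative `x s ≥ 0`.
Both sides of the inequality are even in `x`. -/

namespace Real

lemma sinh_le_mul_cosh {x : ℝ} (hx : 0 ≤ x) : sinh x ≤ x * cosh x := by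
  have hderiv (y : ℝ) : HasDerivAt (fun y => y * cosh y - sinh y) (y * sinh y) y := by
    refine (((hasDerivAt_id' y).mul (hasDerivAt_cosh y)).sub (hasDerivAt_sinh y)).congr_deriv ?_
    ring
  have hmono : MonotoneOn (fun y => y * cosh y - sinh y) (Set.Ici 0) := by
    refine monotoneOn_of_deriv_nonneg (convex_Ici 0) (by fun_prop) (by fun_prop) fun y hy => ?_
    rw [interior_Ici, Set.mem_Ioi] at hy
    rw [(hderiv y).deriv]
    exact mul_nonneg hy.le (sinh_nonneg_iff.2 hy.le)
  simpa using hmono Set.self_mem_Ici hx hx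

lemma tanh_le_self {x : ℝ} (hx : 0 ≤ x) : tanh x ≤ x := by
  rw [tanh_eq_sinh_div_cosh, div_le_iff₀ (cosh_pos x)]
  exact sinh_le_mul_cosh hx

lemma self_le_sinh_mul_cosh {x : ℝ} (hx : 0 ≤ x) : x ≤ sinh x * cosh x := by
  have h := self_le_sinh_iff.2 (by positivity : 0 ≤ 2 * x)
  rw [sinh_two_mul] at h
  linarith

lemma sub_tanh_le_mul_tanh_sq {x : ℝ} (hx : 0 ≤ x) : x - tanh x ≤ x * tanh x ^ 2 := by
  rw [tanh_eq_sinh_div_cosh]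
  field_simp
  nlinarith [cosh_sq x, self_le_sinh_mul_cosh hx]

lemma abs_sub_tanh_le_mul_tanh_sq {x : ℝ} (hx : 0 ≤ x) : |x - tanh x| ≤ x * tanh x ^ 2 := by
  rw [abs_of_nonneg (sub_nonneg.2 (tanh_le_self hx))]
  exact sub_tanh_le_mul_tanh_sq hx

end Real

theorem abs_sub_tanh_le_abs_mul_tanh_sq (x : ℝ) :
    |x - Real.tanh x| ≤ |x| * Real.tanh x ^ 2 := by
  rcases le_total 0 x with hx | hx
  · simpa [abs_of_nonneg hx] using Real.abs_sub_tanh_le_mul_tanh_sq hx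
  · have h := Real.abs_sub_tanh_le_mul_tanh_sq (neg_nonneg.2 hx)
    rwa [Real.tanh_neg, neg_sub_neg, abs_sub_comm, neg_sq, ← abs_of_nonpos hx] at h
end

section
/- For every real number x, |x - tanh(x)| ≤ min(|x|, |x|³). -/
/-!
Put `g x = x - tanh x`. Since `tanh' = 1 - tanh ^ 2`, both `tanh` and `g` are monotone, and they
vanish at `0`; as `tanh + g = id`, each of them is bounded in absolute value by `|x|`. In particular
`tanh x ^ 2 ≤ x ^ 2`, so `x ^ 3 / 3 - g x`, whose derivative is `x ^ 2 - tanh x ^ 2`, is monotone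
too, and the same argument gives `|g x| ≤ |x| ^ 3 / 3`.
-/

theorem abs_le_abs_add_of_monotone {α β : Type*} [LinearOrder α] [AddCommGroup β]
    [LinearOrder β] [IsOrderedAddMonoid β] {f g : α → β} {a : α} (hf : Monotone f)
    (hg : Monotone g) (hfa : f a = 0) (hga : g a = 0) (x : α) : |f x| ≤ |f x + g x| := by
  rcases le_total a x with hax | hxa
  · have hf0 : 0 ≤ f x := hfa ▸ hf hax
    have hg0 : 0 ≤ g x := hga ▸ hg hax
    rw [abs_of_nonneg hf0, abs_of_nonneg (add_nonneg hf0 hg0)]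
    exact le_add_of_nonneg_right hg0
  · have hf0 : f x ≤ 0 := hfa ▸ hf hxa
    have hg0 : g x ≤ 0 := hga ▸ hg hxa
    rw [abs_of_nonpos hf0, abs_of_nonpos (add_nonpos hf0 hg0), neg_add]
    exact le_add_of_nonneg_right (neg_nonneg.mpr hg0)

namespace Real

theorem hasDerivAt_tanh (x : ℝ) : HasDerivAt tanh (1 - tanh x ^ 2) x := by
  have hc : cosh x ≠ 0 := (cosh_pos x).ne'
  have h := (hasDerivAt_sinh x).div (hasDerivAt_cosh x) hc
  rw [show sinh / cosh = tanh from funext fun y => (tanh_eq_sinh_div_cosh y).symm] at h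
  refine h.congr_deriv ?_
  rw [tanh_eq_sinh_div_cosh]
  field_simp

theorem monotone_tanh : Monotone tanh :=
  monotone_of_hasDerivAt_nonneg hasDerivAt_tanh fun x => sub_nonneg.mpr (tanh_sq_lt_one x).le

theorem monotone_id_sub_tanh : Monotone fun x => x - tanh x :=
  monotone_of_hasDerivAt_nonneg
    (fun x => ((hasDerivAt_id' x).fun_sub (hasDerivAt_tanh x)).congr_deriv (by ring))
    fun x => sq_nonneg (tanh x)

theorem abs_tanh_le_abs (x : ℝ) : |tanh x| ≤ |x| := by
  simpa using abs_le_abs_add_of_monotone monotone_tanh monotone_id_sub_tanh tanh_zero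
    (by simp) x

theorem abs_sub_tanh_le_abs (x : ℝ) : |x - tanh x| ≤ |x| := by
  simpa using abs_le_abs_add_of_monotone monotone_id_sub_tanh monotone_tanh (by simp) tanh_zero x

theorem monotone_cube_div_three_sub_sub_tanh : Monotone fun x => x ^ 3 / 3 - (x - tanh x) := by
  refine monotone_of_hasDerivAt_nonneg (f' := fun x => x ^ 2 - tanh x ^ 2) (fun x => ?_) fun x => ?_
  · exact (((hasDerivAt_pow 3 x).div_const 3).fun_sub
      ((hasDerivAt_id' x).fun_sub (hasDerivAt_tanh x))).congr_deriv (by ring)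
  · exact sub_nonneg.mpr (sq_le_sq.mpr (abs_tanh_le_abs x))

theorem abs_sub_tanh_le_abs_pow_three_div_three (x : ℝ) : |x - tanh x| ≤ |x| ^ 3 / 3 := by
  have h := abs_le_abs_add_of_monotone monotone_id_sub_tanh
    monotone_cube_div_three_sub_sub_tanh (a := 0) (by simp) (by simp) x
  rwa [add_sub_cancel, abs_div, abs_pow, abs_of_pos (three_pos : (0 : ℝ) < 3)] at h

end Real

theorem abs_sub_tanh_le_min (x : ℝ) :
    |x - Real.tanh x| ≤ min |x| (|x| ^ 3) := by
  refine le_min (Real.abs_sub_tanh_le_abs x)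
    ((Real.abs_sub_tanh_le_abs_pow_three_div_three x).trans ?_)
  linarith [pow_nonneg (abs_nonneg x) 3]
end

section
/- Let Ω be a nonempty finite type, H : Ω → ℝ, J a real number, and s : Ω → ℝ a function taking values in {-1, 1}. Define Z(H) = ∑_{σ ∈ Ω} exp(H(σ)) and ⟨f⟩_H = (∑_σ f(σ) exp(H(σ)))/Z(H). Then Z(H + J·s)/Z(H) = cosh(J) * (1 + tanh(J) * ⟨s⟩_H). -/
open Finset Real

lemma Real.exp_mul_spin_eq_cosh_add_mul_sinh {J t : ℝ} (ht : t = -1 ∨ t = 1) :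
    exp (J * t) = cosh J + t * sinh J := by
  rcases ht with rfl | rfl
  · simpa [sub_eq_add_neg] using (cosh_sub_sinh J).symm
  · simp [cosh_add_sinh]

lemma sum_exp_add_mul_spin_eq {ι : Type*} (S : Finset ι) (H s : ι → ℝ) (J : ℝ)
    (hs : ∀ i ∈ S, s i = -1 ∨ s i = 1) :
    ∑ i ∈ S, exp (H i + J * s i) =
      cosh J * ∑ i ∈ S, exp (H i) + sinh J * ∑ i ∈ S, s i * exp (H i) := by
  rw [mul_sum, mul_sum, ← sum_add_distrib]
  refine sum_congr rfl fun i hi => ?_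
  rw [exp_add, exp_mul_spin_eq_cosh_add_mul_sinh (hs i hi)]
  ring

theorem partition_ratio_eq_cosh_mul
    {Ω : Type*} [Fintype Ω] [Nonempty Ω] (H : Ω → ℝ) (J : ℝ) (s : Ω → ℝ)
    (hs : ∀ σ, s σ = -1 ∨ s σ = 1) :
    (∑ σ : Ω, Real.exp (H σ + J * s σ)) / (∑ σ : Ω, Real.exp (H σ)) =
      Real.cosh J * (1 + Real.tanh J *
        ((∑ σ : Ω, s σ * Real.exp (H σ)) / (∑ σ : Ω, Real.exp (H σ)))) := by
  have hZ : (∑ σ : Ω, exp (H σ)) ≠ 0 :=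
    (sum_pos (fun σ _ => exp_pos (H σ)) univ_nonempty).ne'
  have hcosh : cosh J ≠ 0 := (cosh_pos J).ne'
  rw [sum_exp_add_mul_spin_eq univ H s J fun σ _ => hs σ, tanh_eq_sinh_div_cosh]
  field_simp
end

section
/- Let Ω be a nonempty finite type, H : Ω → ℝ, J ∈ ℝ, and s : Ω → ℝ with s(σ) ∈ {-1,1} for all σ. With Z and ⟨·⟩ as the partition function and Gibbs expectation for H, one has ln Z(H + J·s) - ln Z(H) ≤ ln cosh(J) + tanh(J) * ⟨s⟩_H. -/
/-!
For a spin `s = ±1` one has `exp (J s) = cosh J + s sinh J`, so the perturbed partition function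
is `cosh J · Z + sinh J · ∑ s e^H = cosh J · Z · (1 + tanh J ⟨s⟩)`. Taking logarithms, the claim
becomes `log (1 + tanh J ⟨s⟩) ≤ tanh J ⟨s⟩`, an instance of `log x ≤ x - 1`.
-/

open Real Finset

lemma Real.exp_mul_of_eq_neg_one_or_eq_one {J s : ℝ} (hs : s = -1 ∨ s = 1) :
    exp (J * s) = cosh J + s * sinh J := by
  rcases hs with rfl | rfl
  · rw [mul_neg_one, neg_one_mul, ← sub_eq_add_neg, cosh_sub_sinh]
  · rw [mul_one, one_mul, cosh_add_sinh]

lemma Real.sum_exp_add_mul_spin {ι : Type*} (t : Finset ι) (H s : ι → ℝ) (J : ℝ)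
    (hs : ∀ i ∈ t, s i = -1 ∨ s i = 1) :
    ∑ i ∈ t, exp (H i + J * s i) =
      cosh J * ∑ i ∈ t, exp (H i) + sinh J * ∑ i ∈ t, s i * exp (H i) := by
  rw [mul_sum, mul_sum, ← sum_add_distrib]
  refine sum_congr rfl fun i hi => ?_
  rw [exp_add, exp_mul_of_eq_neg_one_or_eq_one (hs i hi)]
  ring

lemma Real.log_sub_log_le_div_sub_one {a b : ℝ} (ha : 0 < a) (hb : 0 < b) :
    log a - log b ≤ a / b - 1 := by
  rw [← log_div ha.ne' hb.ne']
  exact log_le_sub_one_of_pos (div_pos ha hb)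

theorem log_partition_diff_le
    {Ω : Type*} [Fintype Ω] [Nonempty Ω] (H : Ω → ℝ) (J : ℝ) (s : Ω → ℝ)
    (hs : ∀ σ, s σ = -1 ∨ s σ = 1) :
    Real.log (∑ σ : Ω, Real.exp (H σ + J * s σ)) -
      Real.log (∑ σ : Ω, Real.exp (H σ)) ≤
    Real.log (Real.cosh J) + Real.tanh J *
      ((∑ σ : Ω, s σ * Real.exp (H σ)) / (∑ σ : Ω, Real.exp (H σ))) := by
  have hZJ : 0 < ∑ σ : Ω, exp (H σ + J * s σ) := by positivity
  rw [sum_exp_add_mul_spin _ H s J fun σ _ => hs σ] at hZJ ⊢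
  set Z := ∑ σ : Ω, exp (H σ)
  set S := ∑ σ : Ω, s σ * exp (H σ)
  have hZ : 0 < Z := by positivity
  have hcoshZ : 0 < cosh J * Z := by positivity
  have hlog := log_sub_log_le_div_sub_one hZJ hcoshZ
  rw [log_mul (cosh_pos J).ne' hZ.ne'] at hlog
  have hratio : (cosh J * Z + sinh J * S) / (cosh J * Z) - 1 = tanh J * (S / Z) := by
    rw [tanh_eq_sinh_div_cosh]
    field_simp
    ring
  linarith
end

section
/- Let Ω be a nonempty finite type, let N be a natural number, let J : Fin N → ℝ, and let s : Fin N → Ω → ℝ with s k σ ∈ {-1,1} for all k, σ. Define H_n(σ) = ∑_{k < n} J k * s k σ and Z_n = ∑_{σ ∈ Ω} exp(H_n(σ)). Then for all n ≤ N, ln Z_N - ln Z_n ≤ ∑_{k=n}^{N-1} ( ln cosh(J k) + |tanh(J k)| ). -/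
/-!
Switching on one coupling `J` multiplies each Boltzmann weight by `exp (J x)` with `x = ±1`, and
`exp (J x) = cosh J * (1 + x tanh J) ≤ cosh J * exp |tanh J|`. Hence switching it on raises
`log Z` by at most `log cosh J + |tanh J|`, and switching on the couplings `n, …, N - 1` one at a
time adds these increments up.
-/

open Real Finset

lemma exp_mul_le_cosh_mul_exp_abs_tanh (J x : ℝ) (hx : x = -1 ∨ x = 1) :
    exp (J * x) ≤ cosh J * exp |tanh J| := by
  have hsinh : sinh J = cosh J * tanh J := by
    rw [tanh_eq_sinh_div_cosh, mul_div_cancel₀ _ (cosh_pos J).ne']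
  have hexp : exp (J * x) = cosh J * (1 + x * tanh J) := by
    rcases hx with rfl | rfl
    · rw [mul_neg_one, ← cosh_sub_sinh, hsinh]; ring
    · rw [mul_one, ← cosh_add_sinh, hsinh]; ring
  have hxt : x * tanh J ≤ |tanh J| := by
    rcases hx with rfl | rfl
    · simpa using neg_le_abs (tanh J)
    · simpa using le_abs_self (tanh J)
  rw [hexp]
  gcongr
  linarith [add_one_le_exp |tanh J|]

section PartitionFunction

variable {ι Ω : Type*} [Fintype Ω] (J : ι → ℝ) (s : ι → Ω → ℝ)

/-- The partition function with only the couplings in `S` switched on; the paper's `Z_n` is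
`partitionFn J s {k | k < n}`. -/
noncomputable def partitionFn (S : Finset ι) : ℝ :=
  ∑ σ, exp (∑ k ∈ S, J k * s k σ)

lemma partitionFn_pos [Nonempty Ω] (S : Finset ι) : 0 < partitionFn J s S :=
  sum_pos (fun _ _ => exp_pos _) univ_nonempty

variable [DecidableEq ι]

lemma partitionFn_insert_le {k : ι} {S : Finset ι} (hk : k ∉ S)
    (hs : ∀ σ, s k σ = -1 ∨ s k σ = 1) :
    partitionFn J s (insert k S) ≤ partitionFn J s S * (cosh (J k) * exp |tanh (J k)|) := by
  rw [partitionFn, partitionFn, sum_mul]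
  gcongr with σ
  rw [sum_insert hk, add_comm, exp_add]
  gcongr
  exact exp_mul_le_cosh_mul_exp_abs_tanh _ _ (hs σ)

lemma log_partitionFn_insert_le [Nonempty Ω] {k : ι} {S : Finset ι} (hk : k ∉ S)
    (hs : ∀ σ, s k σ = -1 ∨ s k σ = 1) :
    log (partitionFn J s (insert k S)) ≤
      log (partitionFn J s S) + (log (cosh (J k)) + |tanh (J k)|) := by
  calc log (partitionFn J s (insert k S))
      ≤ log (partitionFn J s S * (cosh (J k) * exp |tanh (J k)|)) :=
        log_le_log (partitionFn_pos J s _) (partitionFn_insert_le J s hk hs)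
    _ = log (partitionFn J s S) + (log (cosh (J k)) + |tanh (J k)|) := by
        rw [log_mul (partitionFn_pos J s S).ne' (by positivity),
          log_mul (cosh_pos _).ne' (exp_pos _).ne', log_exp]

lemma log_partitionFn_union_sub_le [Nonempty Ω] {S T : Finset ι} (hST : Disjoint S T)
    (hs : ∀ k ∈ T, ∀ σ, s k σ = -1 ∨ s k σ = 1) :
    log (partitionFn J s (S ∪ T)) - log (partitionFn J s S) ≤
      ∑ k ∈ T, (log (cosh (J k)) + |tanh (J k)|) := by
  induction T using Finset.induction_on with
  | empty => simp
  | insert k T hkT ih =>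
    rw [disjoint_insert_right] at hST
    have hk : k ∉ S ∪ T := by simp [hST.1, hkT]
    have hstep := log_partitionFn_insert_le J s hk (hs k (mem_insert_self k T))
    have hprev := ih hST.2 fun j hj => hs j (mem_insert_of_mem hj)
    rw [union_insert, sum_insert hkT]
    linarith

end PartitionFunction

theorem log_partition_telescoped_bound_general
    {Ω : Type*} [Fintype Ω] [Nonempty Ω] (N : ℕ) (J : Fin N → ℝ)
    (s : Fin N → Ω → ℝ) (hs : ∀ k σ, s k σ = -1 ∨ s k σ = 1)
    (n : ℕ) :
    Real.log (∑ σ : Ω, Real.exp (∑ k : Fin N, J k * s k σ)) -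
      Real.log (∑ σ : Ω, Real.exp (∑ k : Fin N,
        if (k : ℕ) < n then J k * s k σ else 0)) ≤
    ∑ k : Fin N, if n ≤ (k : ℕ) then
      Real.log (Real.cosh (J k)) + |Real.tanh (J k)| else 0 := by
  have key := log_partitionFn_union_sub_le J s
    (disjoint_filter_filter_not univ univ fun k : Fin N => (k : ℕ) < n) fun k _ => hs k
  rw [filter_union_filter_not_eq] at key
  simpa only [partitionFn, sum_filter, not_lt, sum_const_zero, mem_univ, filter_true_of_mem]
    using key

theorem log_partition_telescoped_bound
    {Ω : Type*} [Fintype Ω] [Nonempty Ω] (N : ℕ) (J : Fin N → ℝ)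
    (s : Fin N → Ω → ℝ) (hs : ∀ k σ, s k σ = -1 ∨ s k σ = 1)
    (n : ℕ) (hn : n ≤ N) :
    Real.log (∑ σ : Ω, Real.exp (∑ k : Fin N, J k * s k σ)) -
      Real.log (∑ σ : Ω, Real.exp (∑ k : Fin N,
        if (k : ℕ) < n then J k * s k σ else 0)) ≤
    ∑ k : Fin N, if n ≤ (k : ℕ) then
      Real.log (Real.cosh (J k)) + |Real.tanh (J k)| else 0 :=
  log_partition_telescoped_bound_general N J s hs n
end

section
/- Let Ω be a finite probability space, Ω' = ({-1,1})^V the spin configuration space, and let J₁,…,J_N be independent real-valued integrable random variables. Let s k : Ω' → {-1,1} be fixed functions. Define the quenched pressure P_n = E[ln ∑_{σ ∈ Ω'} exp(∑_{k<n} J k · s k σ)], where for each k the Gibbs expectation ⟨s k⟩_{k-1} computed with the first k-1 couplings is independent of J k. Then P_N ≤ P_n + ∑_{k=n}^{N-1} ( E[ln cosh(J k)] + |E[tanh(J k)]| ). -/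
/-!
Adding the coupling `J k` multiplies the partition function by
`cosh (J k) * (1 + tanh (J k) * ⟨s k⟩)`, where `⟨s k⟩` is the Gibbs average of the spin
`s k` under the couplings already present; this uses `exp (x * t) = cosh x + t * sinh x`
for `t = ±1`. Since `log (1 + y) ≤ y`, the log-partition function grows by at most
`log cosh (J k) + tanh (J k) * ⟨s k⟩`. The Gibbs average depends only on the other couplings,
so it is independent of `J k`, and as it lies in `[-1, 1]` the expectation of the last term is
at most `|E[tanh (J k)]|`. Adding the couplings with index `≥ n` one at a time gives the bound.
-/

open MeasureTheory ProbabilityTheory Real Finset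

namespace Real

theorem continuous_tanh : Continuous tanh := by
  simp_rw [funext tanh_eq_sinh_div_cosh]
  exact continuous_sinh.div continuous_cosh fun x => (cosh_pos x).ne'

theorem log_cosh_le_abs (x : ℝ) : log (cosh x) ≤ |x| := by
  rw [log_le_iff_le_exp (cosh_pos x), cosh_eq]
  have := exp_le_exp.2 (le_abs_self x)
  have := exp_le_exp.2 (neg_le_abs x)
  linarith

theorem exp_mul_eq_cosh_add_mul_sinh {t : ℝ} (ht : t = -1 ∨ t = 1) (x : ℝ) :
    exp (x * t) = cosh x + t * sinh x := by
  rcases ht with rfl | rfl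
  · rw [mul_neg_one, ← cosh_sub_sinh]; ring
  · rw [mul_one, one_mul, cosh_add_sinh]

end Real

theorem integral_mul_le_abs_integral_of_indepFun {Ω : Type*} [MeasurableSpace Ω]
    {μ : Measure Ω} [IsProbabilityMeasure μ] {Y Z : Ω → ℝ} (hYZ : IndepFun Y Z μ)
    (hY : AEStronglyMeasurable Y μ) (hZ : AEStronglyMeasurable Z μ)
    (hZ_le : ∀ᵐ ω ∂μ, |Z ω| ≤ 1) :
    ∫ ω, Y ω * Z ω ∂μ ≤ |∫ ω, Y ω ∂μ| := by
  have hZ_int : |∫ ω, Z ω ∂μ| ≤ 1 := by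
    simpa using norm_integral_le_of_norm_le_const (μ := μ) (f := Z) (C := 1) hZ_le
  calc ∫ ω, Y ω * Z ω ∂μ = (∫ ω, Y ω ∂μ) * ∫ ω, Z ω ∂μ :=
        hYZ.integral_mul_eq_mul_integral hY hZ
    _ ≤ |∫ ω, Y ω ∂μ| * |∫ ω, Z ω ∂μ| := by rw [← abs_mul]; exact le_abs_self _
    _ ≤ |∫ ω, Y ω ∂μ| := mul_le_of_le_one_right (abs_nonneg _) hZ_int

section Gibbs

variable {X : Type*} [Fintype X]

noncomputable def partitionFunction (H : X → ℝ) : ℝ := ∑ σ, exp (H σ)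

noncomputable def gibbsAverage (H f : X → ℝ) : ℝ :=
  (∑ σ, exp (H σ) * f σ) / partitionFunction H

theorem measurable_gibbsAverage (f : X → ℝ) :
    Measurable fun H : X → ℝ => gibbsAverage H f := by
  unfold gibbsAverage partitionFunction
  fun_prop

variable [Nonempty X]

theorem partitionFunction_pos (H : X → ℝ) : 0 < partitionFunction H :=
  sum_pos (fun σ _ => exp_pos (H σ)) univ_nonempty

theorem abs_gibbsAverage_le_one (H : X → ℝ) {f : X → ℝ} (hf : ∀ σ, |f σ| ≤ 1) :
    |gibbsAverage H f| ≤ 1 := by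
  rw [gibbsAverage, abs_div, abs_of_pos (partitionFunction_pos H),
    div_le_one (partitionFunction_pos H)]
  calc |∑ σ, exp (H σ) * f σ| ≤ ∑ σ, |exp (H σ) * f σ| := abs_sum_le_sum_abs _ _
    _ ≤ partitionFunction H := sum_le_sum fun σ _ => by
      rw [abs_mul, abs_of_pos (exp_pos _)]
      exact mul_le_of_le_one_right (exp_pos _).le (hf σ)

theorem abs_log_partitionFunction_le {H : X → ℝ} {b : ℝ} (hH : ∀ σ, |H σ| ≤ b) :
    |log (partitionFunction H)| ≤ log (Fintype.card X) + b := by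
  obtain ⟨σ₀⟩ := ‹Nonempty X›
  have hcard : 0 ≤ log (Fintype.card X) := log_nonneg (mod_cast Fintype.card_pos)
  have lower : exp (-b) ≤ partitionFunction H :=
    (exp_le_exp.2 (neg_le_of_abs_le (hH σ₀))).trans
      (single_le_sum (fun σ _ => (exp_pos (H σ)).le) (mem_univ σ₀))
  have upper : partitionFunction H ≤ Fintype.card X * exp b :=
    calc partitionFunction H ≤ ∑ _σ : X, exp b :=
          sum_le_sum fun σ _ => exp_le_exp.2 (le_of_abs_le (hH σ))
      _ = Fintype.card X * exp b := by rw [sum_const, card_univ, nsmul_eq_mul]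
  have log_lower := log_le_log (exp_pos _) lower
  have log_upper := log_le_log (partitionFunction_pos H) upper
  rw [log_exp] at log_lower
  rw [log_mul (by positivity) (exp_pos b).ne', log_exp] at log_upper
  rw [abs_le]
  constructor <;> linarith

omit [Nonempty X] in
theorem partitionFunction_add_mul_spin {t : X → ℝ} (ht : ∀ σ, t σ = -1 ∨ t σ = 1)
    (H : X → ℝ) (x : ℝ) :
    partitionFunction (fun σ => H σ + x * t σ) =
      cosh x * (partitionFunction H + tanh x * ∑ σ, exp (H σ) * t σ) := by
  simp only [partitionFunction, exp_add, exp_mul_eq_cosh_add_mul_sinh (ht _), mul_sum,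
    ← sum_add_distrib, tanh_eq_sinh_div_cosh]
  refine sum_congr rfl fun σ _ => ?_
  field_simp [(cosh_pos x).ne']

theorem log_partitionFunction_add_mul_spin_le {t : X → ℝ} (ht : ∀ σ, t σ = -1 ∨ t σ = 1)
    (H : X → ℝ) (x : ℝ) :
    log (partitionFunction fun σ => H σ + x * t σ) ≤
      log (cosh x) + log (partitionFunction H) + tanh x * gibbsAverage H t := by
  have hfactor : partitionFunction (fun σ => H σ + x * t σ) =
      cosh x * partitionFunction H * (1 + tanh x * gibbsAverage H t) := by
    rw [partitionFunction_add_mul_spin ht, gibbsAverage]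
    field_simp [(partitionFunction_pos H).ne']
  set y := tanh x * gibbsAverage H t
  have hy : |y| < 1 := by
    rw [abs_mul]
    refine mul_lt_one_of_nonneg_of_lt_one_left (abs_nonneg _) (abs_tanh_lt_one x)
      (abs_gibbsAverage_le_one H fun σ => ?_)
    rcases ht σ with h | h <;> simp [h]
  have hy_pos : 0 < 1 + y := by linarith [neg_abs_le y]
  rw [hfactor, log_mul (mul_pos (cosh_pos x) (partitionFunction_pos H)).ne' hy_pos.ne',
    log_mul (cosh_pos x).ne' (partitionFunction_pos H).ne']
  linarith [log_le_sub_one_of_pos hy_pos]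

end Gibbs

section Quenched

variable {Ω ι X : Type*} [MeasurableSpace Ω] {μ : Measure Ω} {J : ι → Ω → ℝ}
  {s : ι → X → ℝ}

def hamiltonian (J : ι → Ω → ℝ) (s : ι → X → ℝ) (S : Finset ι) (ω : Ω) (σ : X) :
    ℝ :=
  ∑ k ∈ S, J k ω * s k σ

theorem measurable_hamiltonian (hmeas : ∀ k, Measurable (J k)) (S : Finset ι) :
    Measurable (hamiltonian J s S) := by
  unfold hamiltonian
  fun_prop

theorem indepFun_hamiltonian (hindep : iIndepFun J μ) (hmeas : ∀ k, Measurable (J k))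
    {S : Finset ι} {k : ι} (hk : k ∉ S) : IndepFun (hamiltonian J s S) (J k) μ := by
  have h : IndepFun (fun ω σ => ∑ i : S, J i ω * s i σ) (J k) μ :=
    (hindep.indepFun_finset S {k} (disjoint_singleton_right.2 hk) hmeas).comp
      (by fun_prop : Measurable fun (x : S → ℝ) σ => ∑ i : S, x i * s i σ)
      (measurable_pi_apply _ :
        Measurable fun y : ({k} : Finset ι) → ℝ => y ⟨k, mem_singleton_self k⟩)
  convert h using 1
  ext ω σ
  exact (sum_coe_sort S fun i => J i ω * s i σ).symm

variable [Fintype X]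

noncomputable def quenchedPressure (μ : Measure Ω) (J : ι → Ω → ℝ) (s : ι → X → ℝ)
    (S : Finset ι) : ℝ :=
  ∫ ω, log (partitionFunction (hamiltonian J s S ω)) ∂μ

theorem integrable_log_partitionFunction_hamiltonian [IsFiniteMeasure μ] [Nonempty X]
    (hmeas : ∀ k, Measurable (J k)) (hint : ∀ k, Integrable (J k) μ)
    (hs : ∀ k σ, |s k σ| ≤ 1) (S : Finset ι) :
    Integrable (fun ω => log (partitionFunction (hamiltonian J s S ω))) μ := by
  have hmeas_log : Measurable fun ω => log (partitionFunction (hamiltonian J s S ω)) := by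
    have := measurable_hamiltonian (s := s) hmeas S
    unfold partitionFunction
    fun_prop
  refine Integrable.mono' ((integrable_const (log (Fintype.card X))).add
    (integrable_finsetSum S fun k _ => (hint k).abs)) hmeas_log.aestronglyMeasurable
    (.of_forall fun ω => abs_log_partitionFunction_le fun σ => ?_)
  calc |hamiltonian J s S ω σ| ≤ ∑ k ∈ S, |J k ω * s k σ| := abs_sum_le_sum_abs _ _
    _ ≤ ∑ k ∈ S, |J k ω| := sum_le_sum fun k _ => by
      rw [abs_mul]; exact mul_le_of_le_one_right (abs_nonneg _) (hs k σ)

variable [IsProbabilityMeasure μ] [Nonempty X]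

theorem quenchedPressure_insert_le [DecidableEq ι] (hindep : iIndepFun J μ)
    (hmeas : ∀ k, Measurable (J k)) (hint : ∀ k, Integrable (J k) μ)
    (hs : ∀ k σ, s k σ = -1 ∨ s k σ = 1) {S : Finset ι} {k : ι} (hk : k ∉ S) :
    quenchedPressure μ J s (insert k S) ≤
      quenchedPressure μ J s S +
        ((∫ ω, log (cosh (J k ω)) ∂μ) + |∫ ω, tanh (J k ω) ∂μ|) := by
  have hs_abs : ∀ k σ, |s k σ| ≤ 1 := fun k σ => by rcases hs k σ with h | h <;> simp [h]
  set logZ := fun ω => log (partitionFunction (hamiltonian J s S ω))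
  set G := fun ω => gibbsAverage (hamiltonian J s S ω) (s k)
  have hG : ∀ ω, |G ω| ≤ 1 := fun ω => abs_gibbsAverage_le_one _ (hs_abs k)
  have hindepG : IndepFun (fun ω => tanh (J k ω)) G μ :=
    ((indepFun_hamiltonian hindep hmeas hk).comp (measurable_gibbsAverage (s k))
      continuous_tanh.measurable).symm
  have htanh_meas : AEStronglyMeasurable (fun ω => tanh (J k ω)) μ :=
    continuous_tanh.comp_aestronglyMeasurable (hint k).aestronglyMeasurable
  have hG_meas : AEStronglyMeasurable G μ :=
    ((measurable_gibbsAverage _).comp (measurable_hamiltonian hmeas S)).aestronglyMeasurable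
  have hlogZ := integrable_log_partitionFunction_hamiltonian hmeas hint hs_abs (s := s)
  have hlogcosh : Integrable (fun ω => log (cosh (J k ω))) μ :=
    (hint k).abs.mono'
      ((continuous_cosh.log fun x => (cosh_pos x).ne').comp_aestronglyMeasurable
        (hint k).aestronglyMeasurable)
      (.of_forall fun ω => by
        rw [norm_eq_abs, abs_of_nonneg (log_nonneg (one_le_cosh _))]
        exact log_cosh_le_abs _)
  have hsum : Integrable (fun ω => log (cosh (J k ω)) + logZ ω) μ := hlogcosh.add (hlogZ S)
  have hprod : Integrable (fun ω => tanh (J k ω) * G ω) μ := by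
    refine .of_bound (htanh_meas.mul hG_meas) 1 (.of_forall fun ω => ?_)
    rw [norm_mul, norm_eq_abs, norm_eq_abs]
    exact mul_le_one₀ (abs_tanh_lt_one _).le (abs_nonneg _) (hG ω)
  have hpointwise : ∀ ω, log (partitionFunction (hamiltonian J s (insert k S) ω)) ≤
      log (cosh (J k ω)) + logZ ω + tanh (J k ω) * G ω := by
    intro ω
    have : hamiltonian J s (insert k S) ω =
        fun σ => hamiltonian J s S ω σ + J k ω * s k σ := by
      ext σ
      rw [hamiltonian, sum_insert hk, add_comm]
      rfl
    rw [this]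
    exact log_partitionFunction_add_mul_spin_le (hs k) _ _
  calc quenchedPressure μ J s (insert k S)
      ≤ ∫ ω, log (cosh (J k ω)) + logZ ω + tanh (J k ω) * G ω ∂μ :=
        integral_mono (hlogZ _) (hsum.add hprod) hpointwise
    _ = (∫ ω, log (cosh (J k ω)) ∂μ) + quenchedPressure μ J s S +
          ∫ ω, tanh (J k ω) * G ω ∂μ := by
        rw [integral_add hsum hprod, integral_add hlogcosh (hlogZ S)]
        rfl
    _ ≤ _ := by
        linarith [integral_mul_le_abs_integral_of_indepFun hindepG htanh_meas hG_meas
          (.of_forall hG)]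

theorem quenchedPressure_union_le [DecidableEq ι] (hindep : iIndepFun J μ)
    (hmeas : ∀ k, Measurable (J k)) (hint : ∀ k, Integrable (J k) μ)
    (hs : ∀ k σ, s k σ = -1 ∨ s k σ = 1) {S T : Finset ι} (hST : Disjoint S T) :
    quenchedPressure μ J s (S ∪ T) ≤ quenchedPressure μ J s S +
      ∑ k ∈ T, ((∫ ω, log (cosh (J k ω)) ∂μ) + |∫ ω, tanh (J k ω) ∂μ|) := by
  induction T using Finset.induction_on with
  | empty => simp
  | insert k T hkT ih =>
    rw [disjoint_insert_right] at hST
    rw [union_insert, sum_insert hkT]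
    have hk : k ∉ S ∪ T := by simp [hST.1, hkT]
    linarith [quenchedPressure_insert_le hindep hmeas hint hs hk, ih hST.2]

end Quenched

theorem quenched_pressure_bound_independent_general
    {α : Type*} [MeasurableSpace α] (μ : Measure α) [IsProbabilityMeasure μ]
    (V N : ℕ) (J : Fin N → α → ℝ)
    (hmeas : ∀ k, Measurable (J k))
    (hint : ∀ k, Integrable (J k) μ)
    (hindep : ProbabilityTheory.iIndepFun J μ)
    (s : Fin N → (Fin V → (({-1, 1} : Finset ℤ))) → ℝ)
    (hs : ∀ k σ, s k σ = -1 ∨ s k σ = 1)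
    (n : ℕ) :
    (∫ ω, Real.log (∑ σ : Fin V → (({-1, 1} : Finset ℤ)),
        Real.exp (∑ k : Fin N, J k ω * s k σ)) ∂μ) ≤
      (∫ ω, Real.log (∑ σ : Fin V → (({-1, 1} : Finset ℤ)),
        Real.exp (∑ k : Fin N, if (k : ℕ) < n then J k ω * s k σ else 0)) ∂μ) +
      ∑ k : Fin N, if n ≤ (k : ℕ) then
        (∫ ω, Real.log (Real.cosh (J k ω)) ∂μ) + |∫ ω, Real.tanh (J k ω) ∂μ|
      else 0 := by
  have : Nonempty (Fin V → (({-1, 1} : Finset ℤ))) := ⟨fun _ => ⟨1, by decide⟩⟩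
  have h := quenchedPressure_union_le hindep hmeas hint hs
    (disjoint_filter_filter_not univ univ fun k : Fin N => (k : ℕ) < n)
  rw [filter_union_filter_not_eq] at h
  simp only [not_lt, ← sum_filter] at h ⊢
  exact h

theorem quenched_pressure_bound_independent
    {α : Type*} [MeasurableSpace α] (μ : Measure α) [IsProbabilityMeasure μ]
    (V N : ℕ) (J : Fin N → α → ℝ)
    (hmeas : ∀ k, Measurable (J k))
    (hint : ∀ k, Integrable (J k) μ)
    (hindep : ProbabilityTheory.iIndepFun J μ)
    (s : Fin N → (Fin V → (({-1, 1} : Finset ℤ))) → ℝ)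
    (hs : ∀ k σ, s k σ = -1 ∨ s k σ = 1)
    (n : ℕ) (hn : n ≤ N) :
    (∫ ω, Real.log (∑ σ : Fin V → (({-1, 1} : Finset ℤ)),
        Real.exp (∑ k : Fin N, J k ω * s k σ)) ∂μ) ≤
      (∫ ω, Real.log (∑ σ : Fin V → (({-1, 1} : Finset ℤ)),
        Real.exp (∑ k : Fin N, if (k : ℕ) < n then J k ω * s k σ else 0)) ∂μ) +
      ∑ k : Fin N, if n ≤ (k : ℕ) then
        (∫ ω, Real.log (Real.cosh (J k ω)) ∂μ) + |∫ ω, Real.tanh (J k ω) ∂μ|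
      else 0 :=
  quenched_pressure_bound_independent_general μ V N J hmeas hint hindep s hs n
end
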